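/- Let D be a real symmetric n×n matrix and S a subset of the index set with |S| = m, and let D_S denote the principal submatrix of D on the rows and columns indexed by S. Then for every 1 ≤ k ≤ m, the k-th smallest eigenvalue of the m×m positive semidefinite matrix (D_S)² is at most the (n−m+k)-th smallest eigenvalue of the n×n positive semidefinite matrix D². -/

import Mathlib

open Matrix

/-- The ascending list of eigenvalues (with multiplicity) of a real symmetric matrix. -/
noncomputable def sortedEigs {m : Type*} [Fintype m] [DecidableEq m]
    (A : Matrix m m ℝ) : List ℝ :=
  if h : A.IsHermitian then (Finset.univ.val.map h.eigenvalues).sort (· ≤ ·) else []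

/-!
Extension by zero `f : ℝ^S → ℝⁿ` is an isometry, and `D_S y` is the restriction of `D (f y)` to
`S`, so `⟪y, D_S² y⟫ = ‖D_S y‖² ≤ ‖D (f y)‖² = ⟪f y, D² (f y)⟫`. Such a domination of quadratic
forms along an isometry forces `λ_k(D_S²) ≤ λ_{n-m+k}(D²)` by a dimension count: the eigenvectors
of `D_S²` with eigenvalue `≥ λ_k(D_S²)` span a space of dimension `≥ m - k`, those of `D²` with
eigenvalue `≤ λ_{n-m+k}(D²)` one of dimension `≥ n - m + k + 1`. Their images in `ℝⁿ` meet in a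
nonzero vector, whose Rayleigh quotient lies between the two eigenvalues.
-/

open Finset Function
open scoped RealInnerProductSpace

namespace List

variable {α : Type*} [Preorder α] [DecidableLE α] {L : List α} {j : ℕ}

theorem SortedLE.succ_le_countP_le_getElem (hL : L.SortedLE) (hj : j < L.length) :
    j + 1 ≤ L.countP (fun x => decide (x ≤ L[j])) := by
  have htake : (L.take (j + 1)).countP (fun x => decide (x ≤ L[j])) = j + 1 := by
    rw [countP_eq_length.mpr, length_take, min_eq_left hj]
    intro a ha
    obtain ⟨i, hi, rfl⟩ := mem_take_iff_getElem.mp ha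
    simpa using hL.getElem_le_getElem_of_le (by omega)
  exact htake ▸ (take_sublist _ _).countP_le

theorem SortedLE.length_sub_le_countP_getElem_le (hL : L.SortedLE) (hj : j < L.length) :
    L.length - j ≤ L.countP (fun x => decide (L[j] ≤ x)) := by
  have hdrop : (L.drop j).countP (fun x => decide (L[j] ≤ x)) = L.length - j := by
    rw [countP_eq_length.mpr, length_drop]
    intro a ha
    obtain ⟨i, hi, rfl⟩ := mem_drop_iff_getElem.mp ha
    simpa using hL.getElem_le_getElem_of_le (by omega)
  exact hdrop ▸ (drop_sublist _ _).countP_le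

end List

section ExtendByZero

variable {κ ι : Type*} [Fintype κ] [Fintype ι] {e : κ → ι}

theorem Function.Injective.sum_comp_le_sum {M : Type*} [AddCommMonoid M] [PartialOrder M]
    [IsOrderedAddMonoid M] (he : Injective e) {f : ι → M} (hf : ∀ i, 0 ≤ f i) :
    ∑ j, f (e j) ≤ ∑ i, f i := by
  classical
  calc ∑ j, f (e j) = ∑ i ∈ univ.map ⟨e, he⟩, f i := (sum_map univ ⟨e, he⟩ f).symm
    _ ≤ ∑ i, f i := sum_le_sum_of_subset_of_nonneg (subset_univ _) fun i _ _ => hf i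

theorem Function.Injective.sum_extend_zero {M N : Type*} [Zero M] [AddCommMonoid N]
    (he : Injective e) (y : κ → M) (g : ι → M → N) (hg : ∀ i, g i 0 = 0) :
    ∑ i, g i (extend e y 0 i) = ∑ j, g (e j) (y j) := by
  classical
  rw [← sum_subset (subset_univ (univ.map ⟨e, he⟩)), sum_map]
  · simp [he.extend_apply]
  · intro i _ hi
    rw [extend_apply' _ _ _ (by simpa using hi), Pi.zero_apply, hg]

noncomputable def EuclideanSpace.extendByZero (he : Injective e) :
    EuclideanSpace ℝ κ →ₗᵢ[ℝ] EuclideanSpace ℝ ι where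
  toLinearMap := (WithLp.linearEquiv 2 ℝ (ι → ℝ)).symm.toLinearMap ∘ₗ
    Function.ExtendByZero.linearMap ℝ e ∘ₗ (WithLp.linearEquiv 2 ℝ (κ → ℝ)).toLinearMap
  norm_map' y := by
    simp only [EuclideanSpace.norm_eq]
    congr 1
    exact he.sum_extend_zero _ (fun _ v => ‖v‖ ^ 2) (by simp)

theorem EuclideanSpace.extendByZero_apply (he : Injective e) (y : EuclideanSpace ℝ κ) :
    WithLp.ofLp (extendByZero he y) = extend e (WithLp.ofLp y) 0 := rfl

end ExtendByZero

theorem LinearMap.exists_ne_zero_mem_of_finrank_lt_add {K V W : Type*} [DivisionRing K]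
    [AddCommGroup V] [Module K V] [AddCommGroup W] [Module K W] [FiniteDimensional K W]
    (f : V →ₗ[K] W) (hf : Injective f) {E : Submodule K V} {F : Submodule K W}
    (h : Module.finrank K W < Module.finrank K E + Module.finrank K F) :
    ∃ y ∈ E, f y ∈ F ∧ y ≠ 0 := by
  have hE : Module.finrank K (E.map f) = Module.finrank K E :=
    (Submodule.equivMapOfInjective f hf E).finrank_eq.symm
  have hnd : ¬Disjoint (E.map f) F := fun hd =>
    (Submodule.finrank_add_finrank_le_of_disjoint hd).not_gt (hE ▸ h)
  obtain ⟨x, hxE, hxF, hx0⟩ : ∃ x ∈ E.map f, x ∈ F ∧ x ≠ 0 := by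
    simpa [Submodule.disjoint_def] using hnd
  obtain ⟨y, hy, rfl⟩ := Submodule.mem_map.mp hxE
  exact ⟨y, hy, hxF, fun h0 => hx0 (by rw [h0, map_zero])⟩

namespace Matrix

variable {ι κ : Type*} [Fintype ι] [DecidableEq ι] [Fintype κ] [DecidableEq κ]

theorem toEuclideanLin_submatrix_apply (D : Matrix ι ι ℝ) {e : κ → ι} (he : Injective e)
    (y : EuclideanSpace ℝ κ) (j : κ) :
    toEuclideanLin (D.submatrix e e) y j =
      toEuclideanLin D (EuclideanSpace.extendByZero he y) (e j) := by
  simp only [toLpLin_apply, mulVec, dotProduct, EuclideanSpace.extendByZero_apply]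
  rw [he.sum_extend_zero _ (fun i v => D (e j) i * v) fun _ => mul_zero _]
  rfl

namespace IsHermitian

variable {A : Matrix ι ι ℝ} {B : Matrix κ κ ℝ}

theorem sortedEigs_eq (hA : A.IsHermitian) :
    sortedEigs A = (univ.val.map hA.eigenvalues).sort (· ≤ ·) :=
  dif_pos hA

theorem sortedLE_sortedEigs (hA : A.IsHermitian) : (sortedEigs A).SortedLE :=
  hA.sortedEigs_eq ▸ (Multiset.pairwise_sort _ _).sortedLE

theorem length_sortedEigs (hA : A.IsHermitian) : (sortedEigs A).length = Fintype.card ι := by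
  simp [hA.sortedEigs_eq]

theorem countP_sortedEigs (hA : A.IsHermitian) (p : ℝ → Prop) [DecidablePred p] :
    (sortedEigs A).countP p = #{i | p (hA.eigenvalues i)} := by
  rw [← Multiset.coe_countP, hA.sortedEigs_eq, Multiset.sort_eq, Multiset.countP_map]
  rfl

theorem succ_le_card_eigenvalues_le_sortedEigs (hA : A.IsHermitian) {k : ℕ}
    (hk : k < Fintype.card ι) :
    k + 1 ≤ #{i | hA.eigenvalues i ≤ (sortedEigs A).getD k 0} := by
  have hk' : k < (sortedEigs A).length := hA.length_sortedEigs ▸ hk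
  have := hA.sortedLE_sortedEigs.succ_le_countP_le_getElem hk'
  rwa [hA.countP_sortedEigs, ← List.getD_eq_getElem _ 0 hk'] at this

theorem card_sub_le_card_sortedEigs_le_eigenvalues (hA : A.IsHermitian) {k : ℕ}
    (hk : k < Fintype.card ι) :
    Fintype.card ι - k ≤ #{i | (sortedEigs A).getD k 0 ≤ hA.eigenvalues i} := by
  have hk' : k < (sortedEigs A).length := hA.length_sortedEigs ▸ hk
  have := hA.sortedLE_sortedEigs.length_sub_le_countP_getElem_le hk'
  rwa [hA.countP_sortedEigs, hA.length_sortedEigs, ← List.getD_eq_getElem _ 0 hk'] at this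

noncomputable def spectralSpan (hA : A.IsHermitian) (p : ℝ → Prop) :
    Submodule ℝ (EuclideanSpace ℝ ι) :=
  Submodule.span ℝ (hA.eigenvectorBasis '' {i | p (hA.eigenvalues i)})

theorem finrank_spectralSpan (hA : A.IsHermitian) (p : ℝ → Prop) [DecidablePred p] :
    Module.finrank ℝ (hA.spectralSpan p) = #{i | p (hA.eigenvalues i)} := by
  rw [spectralSpan, Set.image_eq_range]
  exact (finrank_span_eq_card (hA.eigenvectorBasis.orthonormal.linearIndependent.comp _
    Subtype.val_injective)).trans (Fintype.card_subtype _)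

theorem inner_eigenvectorBasis_eq_zero_of_mem_spectralSpan (hA : A.IsHermitian)
    {p : ℝ → Prop} {y : EuclideanSpace ℝ ι} (hy : y ∈ hA.spectralSpan p) {i : ι}
    (hi : ¬p (hA.eigenvalues i)) :
    ⟪hA.eigenvectorBasis i, y⟫ = 0 := by
  suffices hA.spectralSpan p ≤ (ℝ ∙ hA.eigenvectorBasis i)ᗮ from
    Submodule.mem_orthogonal_singleton_iff_inner_right.mp (this hy)
  refine Submodule.span_le.mpr ?_
  rintro _ ⟨j, hj, rfl⟩
  exact Submodule.mem_orthogonal_singleton_iff_inner_right.mpr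
    (hA.eigenvectorBasis.orthonormal.inner_eq_zero fun hij => hi (hij ▸ hj))

theorem inner_toEuclideanLin_eq_sum (hA : A.IsHermitian) (y : EuclideanSpace ℝ ι) :
    ⟪y, toEuclideanLin A y⟫ = ∑ i, hA.eigenvalues i * ⟪hA.eigenvectorBasis i, y⟫ ^ 2 := by
  rw [← hA.eigenvectorBasis.sum_inner_mul_inner]
  refine sum_congr rfl fun i _ => ?_
  rw [← isSymmetric_toEuclideanLin_iff.mpr hA, toLpLin_apply, mulVec_eigenvectorBasis,
    WithLp.toLp_smul, WithLp.toLp_ofLp, real_inner_smul_left, real_inner_comm y]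
  ring

theorem inner_self_eq_sum (hA : A.IsHermitian) (y : EuclideanSpace ℝ ι) :
    ⟪y, y⟫ = ∑ i, ⟪hA.eigenvectorBasis i, y⟫ ^ 2 := by
  rw [← hA.eigenvectorBasis.sum_inner_mul_inner]
  simp [real_inner_comm, sq]

theorem inner_toEuclideanLin_le_of_mem_spectralSpan (hA : A.IsHermitian) {t : ℝ}
    {y : EuclideanSpace ℝ ι} (hy : y ∈ hA.spectralSpan (· ≤ t)) :
    ⟪y, toEuclideanLin A y⟫ ≤ t * ⟪y, y⟫ := by
  rw [hA.inner_toEuclideanLin_eq_sum, hA.inner_self_eq_sum, mul_sum]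
  refine sum_le_sum fun i _ => ?_
  by_cases hi : hA.eigenvalues i ≤ t
  · exact mul_le_mul_of_nonneg_right hi (sq_nonneg _)
  · simp [hA.inner_eigenvectorBasis_eq_zero_of_mem_spectralSpan hy hi]

theorem le_inner_toEuclideanLin_of_mem_spectralSpan (hA : A.IsHermitian) {s : ℝ}
    {y : EuclideanSpace ℝ ι} (hy : y ∈ hA.spectralSpan (s ≤ ·)) :
    s * ⟪y, y⟫ ≤ ⟪y, toEuclideanLin A y⟫ := by
  rw [hA.inner_toEuclideanLin_eq_sum, hA.inner_self_eq_sum, mul_sum]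
  refine sum_le_sum fun i _ => ?_
  by_cases hi : s ≤ hA.eigenvalues i
  · exact mul_le_mul_of_nonneg_right hi (sq_nonneg _)
  · simp [hA.inner_eigenvectorBasis_eq_zero_of_mem_spectralSpan hy hi]

theorem sortedEigs_getD_le_of_inner_le (hA : A.IsHermitian) (hB : B.IsHermitian)
    (f : EuclideanSpace ℝ κ →ₗᵢ[ℝ] EuclideanSpace ℝ ι)
    (hf : ∀ y, ⟪y, toEuclideanLin B y⟫ ≤ ⟪f y, toEuclideanLin A (f y)⟫)
    {k : ℕ} (hk : k < Fintype.card κ) :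
    (sortedEigs B).getD k 0 ≤
      (sortedEigs A).getD (Fintype.card ι - Fintype.card κ + k) 0 := by
  have hκι : Fintype.card κ ≤ Fintype.card ι := by
    simpa using f.toLinearMap.finrank_le_finrank_of_injective f.injective
  have hE := hB.card_sub_le_card_sortedEigs_le_eigenvalues hk
  have hF := hA.succ_le_card_eigenvalues_le_sortedEigs
    (k := Fintype.card ι - Fintype.card κ + k) (by omega)
  set s := (sortedEigs B).getD k 0
  set t := (sortedEigs A).getD (Fintype.card ι - Fintype.card κ + k) 0
  obtain ⟨y, hyE, hyF, hy0⟩ := f.toLinearMap.exists_ne_zero_mem_of_finrank_lt_add f.injective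
    (E := hB.spectralSpan (s ≤ ·)) (F := hA.spectralSpan (· ≤ t))
    (by rw [hB.finrank_spectralSpan, hA.finrank_spectralSpan, finrank_euclideanSpace]; omega)
  refine le_of_mul_le_mul_right ?_ (real_inner_self_pos.mpr hy0)
  calc s * ⟪y, y⟫ ≤ ⟪y, toEuclideanLin B y⟫ := hB.le_inner_toEuclideanLin_of_mem_spectralSpan hyE
    _ ≤ ⟪f y, toEuclideanLin A (f y)⟫ := hf y
    _ ≤ t * ⟪f y, f y⟫ := hA.inner_toEuclideanLin_le_of_mem_spectralSpan hyF
    _ = t * ⟪y, y⟫ := by rw [f.inner_map_map]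

variable {D : Matrix ι ι ℝ}

theorem mul_self (hD : D.IsHermitian) : (D * D).IsHermitian := by
  simpa [sq] using hD.pow 2

theorem inner_toEuclideanLin_mul_self (hD : D.IsHermitian) (x : EuclideanSpace ℝ ι) :
    ⟪x, toEuclideanLin (D * D) x⟫ = ‖toEuclideanLin D x‖ ^ 2 := by
  rw [toLpLin_mul_same, LinearMap.comp_apply, ← isSymmetric_toEuclideanLin_iff.mpr hD,
    real_inner_self_eq_norm_sq]

theorem inner_submatrix_mul_self_le (hD : D.IsHermitian) {e : κ → ι} (he : Injective e)
    (y : EuclideanSpace ℝ κ) :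
    ⟪y, toEuclideanLin (D.submatrix e e * D.submatrix e e) y⟫ ≤
      ⟪EuclideanSpace.extendByZero he y,
        toEuclideanLin (D * D) (EuclideanSpace.extendByZero he y)⟫ := by
  rw [(hD.submatrix e).inner_toEuclideanLin_mul_self, hD.inner_toEuclideanLin_mul_self,
    EuclideanSpace.real_norm_sq_eq, EuclideanSpace.real_norm_sq_eq]
  simp only [toEuclideanLin_submatrix_apply D he]
  exact he.sum_comp_le_sum fun i => sq_nonneg _

theorem sortedEigs_submatrix_mul_self_getD_le (hD : D.IsHermitian) {e : κ → ι}
    (he : Injective e) {k : ℕ} (hk : k < Fintype.card κ) :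
    (sortedEigs (D.submatrix e e * D.submatrix e e)).getD k 0 ≤
      (sortedEigs (D * D)).getD (Fintype.card ι - Fintype.card κ + k) 0 :=
  hD.mul_self.sortedEigs_getD_le_of_inner_le (hD.submatrix e).mul_self
    (EuclideanSpace.extendByZero he) (hD.inner_submatrix_mul_self_le he) hk

end IsHermitian

end Matrix

/-- **Spectral monotonicity, matrix form.**  If `D` is a real symmetric `n × n` matrix
and `D_S` its principal submatrix on a subset `S` with `m = |S|`, then for every `k`
(0-based, `k < m`) the `k`-th smallest eigenvalue of `(D_S)²` is at most the
`(n - m + k)`-th smallest eigenvalue of `D²`. -/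
theorem principal_submatrix_square_eigenvalues
    (n : ℕ) (D : Matrix (Fin n) (Fin n) ℝ) (hD : D.IsSymm) (S : Finset (Fin n))
    (DS : Matrix {i // i ∈ S} {i // i ∈ S} ℝ)
    (hDS : DS = Matrix.of fun i j => D i.1 j.1) :
    ∀ k < S.card,
      (sortedEigs (DS * DS)).getD k 0 ≤
        (sortedEigs (D * D)).getD (n - S.card + k) 0 := by
  intro k hk
  obtain rfl : DS = D.submatrix Subtype.val Subtype.val := hDS
  simpa using (isHermitian_iff_isSymm.mpr hD).sortedEigs_submatrix_mul_self_getD_le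
    (Subtype.val_injective (p := (· ∈ S))) (by simpa using hk)
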